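/- arXiv:1912.03662 — 2 statements merged into one kernel-verified Lean document; each statement's English description precedes it below -/
import Mathlib

section
/- Let X ∈ R^p be a continuous random vector such that for every unit vector s, the CDF F_{s^T X} is (uniformly) continuous. Let U_i = F_{s_i^T X}(s_i^T X) for unit vectors s_1, s_2. Then |U_1 - U_2| → 0 in probability as ||s_1 - s_2|| → 0. -/
open MeasureTheory ProbabilityTheory Filter
open scoped Topology ENNReal NNReal RealInnerProductSpace

noncomputable section

/-- `k`-th binary digit of `u` (for `k ≥ 1`). -/
def bdigit (k : ℕ) (u : ℝ) : ℝ := if ⌊u * 2 ^ k⌋ % 2 = 1 then 1 else 0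

def sdig (k : ℕ) (u : ℝ) : ℝ := 2 * bdigit k u - 1

def inter (d : ℕ) (a : Finset (Fin d)) (u : ℝ) : ℝ := ∏ k ∈ a, sdig (k.1 + 1) u

def trunc (d : ℕ) (u : ℝ) : ℝ := ∑ k ∈ Finset.range d, bdigit (k + 1) u / 2 ^ (k + 1)

def Cd (d : ℕ) : Finset (Finset (Fin d) × Finset (Fin d)) :=
  Finset.univ.filter fun p => p.1 ≠ ∅ ∧ p.2 ≠ ∅

def BdUV {Ω : Type*} [MeasurableSpace Ω] (μ : Measure Ω) (d : ℕ) (U V : Ω → ℝ) : ℝ :=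
  (((2 : ℝ) ^ d - 1)⁻¹) ^ 2 *
    ∑ p ∈ Cd d, (∫ ω, inter d p.1 (U ω) * inter d p.2 (V ω) ∂μ) ^ 2

/-- Euclidean space ℝ^p. -/
abbrev Euc (p : ℕ) := EuclideanSpace ℝ (Fin p)

/-- CDF-transform of the projection of `X` on direction `s`. -/
def projCDF {Ω : Type*} [MeasurableSpace Ω] (μ : Measure Ω) {p : ℕ}
    (X : Ω → Euc p) (s : Euc p) (ω : Ω) : ℝ :=
  cdf (μ.map fun ω' => ⟪s, X ω'⟫) ⟪s, X ω⟫

/-- Dependence measure of the projected pair `(s^T X, t^T Y)`. -/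
def BdProj {Ω : Type*} [MeasurableSpace Ω] (μ : Measure Ω) (d : ℕ) {p q : ℕ}
    (X : Ω → Euc p) (Y : Ω → Euc q) (s : Euc p) (t : Euc q) : ℝ :=
  BdUV μ d (projCDF μ X s) (projCDF μ Y t)

/-! Let `A = {δ ≤ |s₂ᵀX - s₁ᵀX|}`. Moving the threshold by `δ` turns `{s₂ᵀX ≤ w}` into
`{s₁ᵀX ≤ w ± δ}` up to `A`, so uniform continuity of `F₁` puts `F₁` and `F₂` uniformly within
`ε + P(A)` of each other; off `A` the same continuity makes `F₁(s₁ᵀX)` close to `F₁(s₂ᵀX)`.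
Finally `P(A) → 0`, since `s ↦ sᵀX` is pointwise continuous, hence continuous in probability. -/

theorem tendstoInMeasure_of_tendsto_ae_of_isCountablyGenerated {α ι E : Type*}
    [MeasurableSpace α] {μ : Measure α} [IsFiniteMeasure μ] [PseudoEMetricSpace E]
    {l : Filter ι} [l.IsCountablyGenerated] {f : ι → α → E} {g : α → E}
    (hf : ∀ i, AEStronglyMeasurable (f i) μ) (hfg : ∀ᵐ x ∂μ, Tendsto (f · x) l (𝓝 (g x))) :
    TendstoInMeasure μ f l g := fun ε hε =>
  tendsto_of_seq_tendsto fun u hu =>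
    tendstoInMeasure_of_tendsto_ae (fun n => hf (u n))
      (hfg.mono fun _ hx => hx.comp hu) ε hε

theorem tendstoInMeasure_inner {Ω E : Type*} [MeasurableSpace Ω] {μ : Measure Ω}
    [IsFiniteMeasure μ] [NormedAddCommGroup E] [InnerProductSpace ℝ E]
    {X : Ω → E} (hX : AEStronglyMeasurable X μ) (s₀ : E) :
    TendstoInMeasure μ (fun s ω => ⟪s, X ω⟫) (𝓝 s₀) (fun ω => ⟪s₀, X ω⟫) :=
  tendstoInMeasure_of_tendsto_ae_of_isCountablyGenerated
    (fun _ => aestronglyMeasurable_const.inner hX)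
    (ae_of_all _ fun _ => (continuous_id.inner continuous_const).tendsto s₀)

section

variable {Ω : Type*} [MeasurableSpace Ω] {μ : Measure Ω} [IsProbabilityMeasure μ]
  {Y Z : Ω → ℝ} {δ ε : ℝ}

theorem cdf_map_le_cdf_map_add (hY : AEMeasurable Y μ) (hZ : AEMeasurable Z μ) (w : ℝ) :
    cdf (μ.map Z) w ≤ cdf (μ.map Y) (w + δ) + μ.real {ω | δ ≤ |Z ω - Y ω|} := by
  have := Measure.isProbabilityMeasure_map (μ := μ) hY
  have := Measure.isProbabilityMeasure_map (μ := μ) hZ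
  rw [cdf_eq_real, cdf_eq_real, map_measureReal_apply_of_aemeasurable hY measurableSet_Iic,
    map_measureReal_apply_of_aemeasurable hZ measurableSet_Iic]
  refine (measureReal_mono fun ω hω => ?_).trans (measureReal_union_le _ _)
  by_cases hω' : δ ≤ |Z ω - Y ω|
  · exact Or.inr hω'
  · left
    simp only [Set.mem_preimage, Set.mem_Iic] at hω ⊢
    linarith [le_abs_self (Z ω - Y ω), neg_abs_le (Z ω - Y ω), not_le.mp hω']

theorem abs_cdf_map_sub_cdf_map_le (hY : AEMeasurable Y μ) (hZ : AEMeasurable Z μ) (hδ : 0 ≤ δ)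
    (hF : ∀ w w', |w - w'| ≤ δ → |cdf (μ.map Y) w - cdf (μ.map Y) w'| ≤ ε) (w : ℝ) :
    |cdf (μ.map Y) w - cdf (μ.map Z) w| ≤ ε + μ.real {ω | δ ≤ |Z ω - Y ω|} := by
  have hYZ := cdf_map_le_cdf_map_add (δ := δ) hZ hY (w - δ)
  have hZY := cdf_map_le_cdf_map_add (δ := δ) hY hZ w
  simp_rw [abs_sub_comm (Y _), sub_add_cancel] at hYZ
  have h₁ := abs_le.mp (hF w (w - δ) (by rw [sub_sub_cancel, abs_of_nonneg hδ]))
  have h₂ := abs_le.mp (hF (w + δ) w (by rw [add_sub_cancel_left, abs_of_nonneg hδ]))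
  rw [abs_sub_le_iff]
  constructor <;> linarith [h₁.2, h₂.2]

theorem setOf_lt_abs_cdf_map_comp_sub_subset (hY : AEMeasurable Y μ) (hZ : AEMeasurable Z μ)
    (hδ : 0 ≤ δ)
    (hF : ∀ w w', |w - w'| ≤ δ → |cdf (μ.map Y) w - cdf (μ.map Y) w'| ≤ ε) :
    {ω | 2 * ε + μ.real {ω | δ ≤ |Z ω - Y ω|} <
        |cdf (μ.map Y) (Y ω) - cdf (μ.map Z) (Z ω)|} ⊆ {ω | δ ≤ |Z ω - Y ω|} := by
  intro ω hω
  rw [Set.mem_ofPred_eq] at hω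
  by_contra hclose
  rw [Set.mem_ofPred_eq, not_le] at hclose
  have h₁ := hF (Y ω) (Z ω) (by rw [abs_sub_comm]; exact hclose.le)
  have h₂ := abs_cdf_map_sub_cdf_map_le hY hZ hδ hF (Z ω)
  have := abs_sub_le (cdf (μ.map Y) (Y ω)) (cdf (μ.map Y) (Z ω)) (cdf (μ.map Z) (Z ω))
  linarith

end

/-- If every projection CDF of `X` is uniformly continuous, then
with `U_i = F_{s_i^T X}(s_i^T X)`, `|U₁ - U₂| → 0` in probability as
`‖s₁ - s₂‖ → 0`. -/
theorem stmt10 {Ω : Type*} [MeasurableSpace Ω] (μ : Measure Ω) [IsProbabilityMeasure μ]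
    {p : ℕ} (X : Ω → Euc p) (hX : Measurable X)
    (hcdf : ∀ s : Euc p, ‖s‖ = 1 →
      UniformContinuous fun w => cdf (μ.map fun ω => ⟪s, X ω⟫) w) :
    ∀ s₁ : Euc p, ‖s₁‖ = 1 → ∀ ε > (0 : ℝ), ∀ κ > (0 : ℝ), ∃ η > (0 : ℝ),
      ∀ s₂ : Euc p, ‖s₂‖ = 1 → ‖s₁ - s₂‖ < η →
        (μ {ω | ε < |projCDF μ X s₁ ω - projCDF μ X s₂ ω|}).toReal < κ := by
  intro s₁ hs₁ ε hε κ hκ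
  obtain ⟨δ, hδ, hmod⟩ := Metric.uniformContinuous_iff.mp (hcdf s₁ hs₁) (ε / 3) (by positivity)
  have hF : ∀ w w', |w - w'| ≤ δ / 2 → |cdf (μ.map fun ω => ⟪s₁, X ω⟫) w -
      cdf (μ.map fun ω => ⟪s₁, X ω⟫) w'| ≤ ε / 3 := fun w w' h =>
    (hmod (by rw [Real.dist_eq]; linarith)).le
  have hsmall : ∀ᶠ s in 𝓝 s₁,
      μ.real {ω | δ / 2 ≤ |⟪s, X ω⟫ - ⟪s₁, X ω⟫|} < min (ε / 3) κ :=
    (tendstoInMeasure_iff_measureReal_dist.mp (tendstoInMeasure_inner hX.aestronglyMeasurable s₁)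
      (δ / 2) (by positivity)).eventually (gt_mem_nhds (by positivity))
  obtain ⟨η, hη, hη'⟩ := Metric.eventually_nhds_iff.mp hsmall
  refine ⟨η, hη, fun s₂ _ hclose => ?_⟩
  have hA := hη' (by rwa [dist_eq_norm, norm_sub_rev])
  have hslack : 2 * (ε / 3) + μ.real {ω | δ / 2 ≤ |⟪s₂, X ω⟫ - ⟪s₁, X ω⟫|} ≤ ε := by
    linarith [min_le_left (ε / 3) κ]
  have hmeas : ∀ s : Euc p, AEMeasurable (fun ω => ⟪s, X ω⟫) μ :=
    fun s => (measurable_const.inner hX).aemeasurable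
  calc μ.real {ω | ε < |projCDF μ X s₁ ω - projCDF μ X s₂ ω|}
      ≤ μ.real {ω | δ / 2 ≤ |⟪s₂, X ω⟫ - ⟪s₁, X ω⟫|} :=
        measureReal_mono fun ω hω =>
          setOf_lt_abs_cdf_map_comp_sub_subset (hmeas s₁) (hmeas s₂) (by positivity) hF
            (hslack.trans_lt hω)
    _ < κ := hA.trans_le (min_le_right _ _)
end
end

section
/- Under the setup of the previous lemma, for any ε > 0, depth d, and dyadic intervals I_i = ((i-1)/2^d, i/2^d], I_j = ((j-1)/2^d, j/2^d], there exists η > 0 such that |Pr(U_1 ∈ I_i, V_1 ∈ I_j) - Pr(U_2 ∈ I_i, V_2 ∈ I_j)| < ε whenever ||s_1 - s_2|| < η and ||t_1 - t_2|| < η. -/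
open MeasureTheory ProbabilityTheory Filter
open scoped Topology ENNReal NNReal RealInnerProductSpace

noncomputable section

/-! ### Auxiliary lemmas -/

section Aux

open Set

/-- The set where a continuous cdf is `≤ d` has measure at most `ofReal d`. -/
lemma cdf_level_measure_le (ν : Measure ℝ) [IsProbabilityMeasure ν]
    (hF : Continuous (cdf ν)) (d : ℝ) :
    ν {z | cdf ν z ≤ d} ≤ ENNReal.ofReal d := by
  set F := cdf ν with hFdef
  set T : Set ℝ := {z | F z ≤ d} with hT
  rcases T.eq_empty_or_nonempty with h | hne
  · simp [h]
  by_cases hbdd : BddAbove T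
  · have hclosed : IsClosed T := isClosed_le hF continuous_const
    have hb : sSup T ∈ T := hclosed.csSup_mem hne hbdd
    have hsub : T ⊆ Iic (sSup T) := fun z hz => le_csSup hbdd hz
    calc ν T ≤ ν (Iic (sSup T)) := measure_mono hsub
      _ = ENNReal.ofReal (F (sSup T)) := (ofReal_cdf ν _).symm
      _ ≤ ENNReal.ofReal d := ENNReal.ofReal_le_ofReal hb
  · have hFd : ∀ x, F x ≤ d := by
      intro x
      rcases not_bddAbove_iff.1 hbdd x with ⟨z, hz, hxz⟩
      exact le_trans (monotone_cdf ν hxz.le) hz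
    have h1d : (1 : ℝ) ≤ d :=
      le_of_tendsto (tendsto_cdf_atTop ν) (Filter.Eventually.of_forall hFd)
    calc ν T ≤ 1 := prob_le_one
      _ = ENNReal.ofReal 1 := by simp
      _ ≤ ENNReal.ofReal d := ENNReal.ofReal_le_ofReal h1d

/-- The set where a continuous cdf is `≤ c` has measure at least `ofReal c`, for `0 < c < 1`. -/
lemma le_cdf_level_measure (ν : Measure ℝ) [IsProbabilityMeasure ν]
    (hF : Continuous (cdf ν)) {c : ℝ} (hc0 : 0 < c) (hc1 : c < 1) :
    ENNReal.ofReal c ≤ ν {z | cdf ν z ≤ c} := by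
  set F := cdf ν with hFdef
  set T : Set ℝ := {z | F z ≤ c} with hT
  have hne : T.Nonempty := by
    have : ∀ᶠ x in atBot, F x < c := (tendsto_cdf_atBot ν).eventually_lt_const hc0
    rcases this.exists with ⟨x, hx⟩
    exact ⟨x, hx.le⟩
  have hbdd : BddAbove T := by
    have : ∀ᶠ x in atTop, c < F x := (tendsto_cdf_atTop ν).eventually_const_lt hc1
    rcases this.exists with ⟨x₀, hx₀⟩
    refine ⟨x₀, fun z hz => ?_⟩
    by_contra hzx
    push_neg at hzx
    exact absurd (le_trans (monotone_cdf ν hzx.le) hz) (not_le.2 hx₀)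
  have hclosed : IsClosed T := isClosed_le hF continuous_const
  set b := sSup T with hb
  have hbT : b ∈ T := hclosed.csSup_mem hne hbdd
  have hFb : c ≤ F b := by
    by_contra hlt
    push_neg at hlt
    have hopen : IsOpen {z | F z < c} := isOpen_lt hF continuous_const
    rcases Metric.isOpen_iff.1 hopen b hlt with ⟨r, hr, hball⟩
    have : b + r / 2 ∈ T := by
      have hmem : b + r / 2 ∈ Metric.ball b r := by
        simp only [Metric.mem_ball, Real.dist_eq]
        have h3 : |b + r / 2 - b| = r / 2 := by
          rw [show b + r / 2 - b = r / 2 by ring]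
          exact abs_of_pos (half_pos hr)
        rw [h3]
        linarith
      exact le_of_lt (show F (b + r / 2) < c from hball hmem)
    have := le_csSup hbdd this
    linarith
  calc ENNReal.ofReal c ≤ ENNReal.ofReal (F b) := ENNReal.ofReal_le_ofReal hFb
    _ = ν (Iic b) := ofReal_cdf ν b
    _ ≤ ν T := measure_mono fun z hz => le_trans (monotone_cdf ν hz) hbT

/-- **Quantile bound**: for a continuous cdf, the preimage of `(c, d]` under the cdf
has measure at most `d - c`. -/
lemma quantile_bound (ν : Measure ℝ) [IsProbabilityMeasure ν]
    (hF : Continuous (cdf ν)) {c d : ℝ} (hcd : c ≤ d) :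
    ν {z | cdf ν z ∈ Ioc c d} ≤ ENNReal.ofReal (d - c) := by
  set F := cdf ν with hFdef
  set S : Set ℝ := {z | F z ∈ Ioc c d} with hS
  by_cases hc1 : 1 ≤ c
  · have : S = ∅ := by
      ext z
      simp only [hS, mem_setOf_eq, mem_Ioc, mem_empty_iff_false, iff_false, not_and]
      intro h
      exact absurd (lt_of_le_of_lt (le_trans (cdf_le_one ν z) hc1) h) (lt_irrefl _)
    simp [this]
  push_neg at hc1
  by_cases hc0 : c ≤ 0
  · have h1 : ν S ≤ ν {z | F z ≤ d} := measure_mono fun z hz => hz.2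
    calc ν S ≤ ENNReal.ofReal d := h1.trans (cdf_level_measure_le ν hF d)
      _ ≤ ENNReal.ofReal (d - c) := ENNReal.ofReal_le_ofReal (by linarith)
  · push_neg at hc0
    set T' : Set ℝ := {z | F z ≤ c} with hT'
    have hdisj : Disjoint S T' := by
      rw [Set.disjoint_left]
      intro z hzS hzT'
      exact absurd hzS.1 (not_lt.2 hzT')
    have hmeas : MeasurableSet T' := (isClosed_le hF continuous_const).measurableSet
    have hunion : ν S + ν T' = ν (S ∪ T') := (measure_union hdisj hmeas).symm
    have hsub : S ∪ T' ⊆ {z | F z ≤ d} := by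
      rintro z (hz | hz)
      · exact hz.2
      · exact le_trans hz hcd
    have key : ν S + ENNReal.ofReal c ≤ ENNReal.ofReal d := by
      calc ν S + ENNReal.ofReal c ≤ ν S + ν T' :=
            add_le_add_right (le_cdf_level_measure ν hF hc0 hc1) _
        _ = ν (S ∪ T') := hunion
        _ ≤ ν {z | F z ≤ d} := measure_mono hsub
        _ ≤ ENNReal.ofReal d := cdf_level_measure_le ν hF d
    have hd : ENNReal.ofReal d ≤ ENNReal.ofReal (d - c) + ENNReal.ofReal c := by
      rw [← ENNReal.ofReal_add (by linarith) hc0.le]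
      simp
    exact ENNReal.le_of_add_le_add_right ENNReal.ofReal_ne_top (key.trans hd)

variable {Ω : Type*} [MeasurableSpace Ω] (μ : Measure Ω) [IsProbabilityMeasure μ]
  {p : ℕ} (X : Ω → Euc p)

lemma cdf_map_eq (hX : Measurable X) (s : Euc p) (v : ℝ) :
    cdf (μ.map fun ω => ⟪s, X ω⟫) v = (μ {ω | ⟪s, X ω⟫ ≤ v}).toReal := by
  have hw : Measurable fun ω => ⟪s, X ω⟫ := measurable_const.inner hX
  haveI : IsProbabilityMeasure (μ.map fun ω => ⟪s, X ω⟫) :=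
    Measure.isProbabilityMeasure_map hw.aemeasurable
  rw [cdf_eq_real, measureReal_def, Measure.map_apply hw measurableSet_Iic]
  rfl

lemma projCDF_Ioc_le (hX : Measurable X) (s : Euc p)
    (hF : Continuous fun w => cdf (μ.map fun ω => ⟪s, X ω⟫) w) {c d : ℝ} (hcd : c ≤ d) :
    μ {ω | projCDF μ X s ω ∈ Set.Ioc c d} ≤ ENNReal.ofReal (d - c) := by
  set ν := μ.map fun ω => ⟪s, X ω⟫ with hν
  have hw : Measurable fun ω => ⟪s, X ω⟫ := measurable_const.inner hX
  haveI : IsProbabilityMeasure ν := Measure.isProbabilityMeasure_map hw.aemeasurable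
  have hset : MeasurableSet {z : ℝ | cdf ν z ∈ Ioc c d} :=
    hF.measurable measurableSet_Ioc
  have heq : {ω | projCDF μ X s ω ∈ Ioc c d} =
      (fun ω => ⟪s, X ω⟫) ⁻¹' {z | cdf ν z ∈ Ioc c d} := rfl
  rw [heq, ← Measure.map_apply hw hset]
  exact quantile_bound ν hF hcd

/-- Outside a small bad set, the CDF-transforms for nearby directions are uniformly close. -/
lemma dirLemma (hX : Measurable X) (s₁ : Euc p)
    (hF : UniformContinuous fun w => cdf (μ.map fun ω => ⟪s₁, X ω⟫) w)
    {δ : ℝ} (hδ : 0 < δ) :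
    ∃ η > (0 : ℝ), ∃ Bad : Set Ω, μ Bad ≤ ENNReal.ofReal δ ∧
      ∀ s₂ : Euc p, ‖s₁ - s₂‖ < η → ∀ ω, ω ∉ Bad →
        |projCDF μ X s₂ ω - projCDF μ X s₁ ω| < δ := by
  obtain ⟨δ₂, hδ₂, hmod⟩ := Metric.uniformContinuous_iff.1 hF (δ / 4) (by linarith)
  have htight : ∃ M : ℕ, μ {ω | (M : ℝ) < ‖X ω‖} ≤ ENNReal.ofReal (δ / 4) := by
    set A : ℕ → Set Ω := fun n => {ω | (n : ℝ) < ‖X ω‖} with hA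
    have hmeas : ∀ n, NullMeasurableSet (A n) μ := fun n =>
      (measurableSet_lt measurable_const hX.norm).nullMeasurableSet
    have hanti : Antitone A := by
      intro n m hnm ω hω
      simp only [hA, mem_setOf_eq] at hω ⊢
      have h : (n : ℝ) ≤ m := Nat.cast_le.mpr hnm
      linarith
    have hiInter : (⋂ n, A n) = ∅ := by
      ext ω
      simp only [mem_iInter, mem_empty_iff_false, iff_false, not_forall]
      obtain ⟨n, hn⟩ := exists_nat_gt ‖X ω‖
      exact ⟨n, by simp [hA, not_lt.2 hn.le]⟩
    have htend : Tendsto (μ ∘ A) atTop (𝓝 0) := by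
      have := tendsto_measure_iInter_atTop hmeas hanti ⟨0, measure_ne_top μ _⟩
      rwa [hiInter, measure_empty] at this
    have : ∀ᶠ n in atTop, (μ ∘ A) n < ENNReal.ofReal (δ / 4) :=
      htend.eventually_lt_const (by simp [ENNReal.ofReal_pos]; linarith)
    obtain ⟨M, hM⟩ := this.exists
    exact ⟨M, hM.le⟩
  obtain ⟨M, hM⟩ := htight
  set Bad : Set Ω := {ω | (M : ℝ) < ‖X ω‖} with hBad
  have hBadReal : (μ Bad).toReal ≤ δ / 4 :=
    ENNReal.toReal_le_of_le_ofReal (by linarith) hM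
  refine ⟨δ₂ / (2 * (M + 1)), by positivity, Bad,
    hM.trans (ENNReal.ofReal_le_ofReal (by linarith)), ?_⟩
  intro s₂ hs₂ ω hω
  set F : ℝ → ℝ := fun v => (μ {ω' | ⟪s₁, X ω'⟫ ≤ v}).toReal with hFdef
  set F₂ : ℝ → ℝ := fun v => (μ {ω' | ⟪s₂, X ω'⟫ ≤ v}).toReal with hF₂def
  have hFmod : ∀ v v' : ℝ, |v - v'| < δ₂ → |F v - F v'| < δ / 4 := by
    intro v v' hvv
    have := hmod (a := v) (b := v') (by rwa [Real.dist_eq])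
    rw [Real.dist_eq, cdf_map_eq μ X hX, cdf_map_eq μ X hX] at this
    exact this
  have hclose : ∀ ω', ω' ∉ Bad → |⟪s₂, X ω'⟫ - ⟪s₁, X ω'⟫| < δ₂ / 2 := by
    intro ω' hω'
    have hXn : ‖X ω'‖ ≤ (M : ℝ) := not_lt.1 hω'
    have h1 : ⟪s₂, X ω'⟫ - ⟪s₁, X ω'⟫ = ⟪s₂ - s₁, X ω'⟫ := (inner_sub_left _ _ _).symm
    rw [h1]
    calc |⟪s₂ - s₁, X ω'⟫| ≤ ‖s₂ - s₁‖ * ‖X ω'‖ := abs_real_inner_le_norm _ _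
      _ ≤ ‖s₂ - s₁‖ * ((M : ℝ) + 1) := by
          apply mul_le_mul_of_nonneg_left (by linarith) (norm_nonneg _)
      _ < δ₂ / (2 * (M + 1)) * ((M : ℝ) + 1) := by
          apply mul_lt_mul_of_pos_right _ (by positivity)
          rwa [norm_sub_rev]
      _ = δ₂ / 2 := by field_simp
  have hsup : ∀ v : ℝ, |F₂ v - F v| ≤ (μ Bad).toReal + δ / 4 := by
    intro v
    have hshift₁ : |F (v + δ₂ / 2) - F v| < δ / 4 := by
      apply hFmod
      rw [show v + δ₂ / 2 - v = δ₂ / 2 by ring, abs_of_pos (by linarith)]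
      linarith
    have hshift₂ : |F (v - δ₂ / 2) - F v| < δ / 4 := by
      apply hFmod
      rw [show v - δ₂ / 2 - v = -(δ₂ / 2) by ring, abs_neg, abs_of_pos (by linarith)]
      linarith
    have hUB : F₂ v ≤ (μ Bad).toReal + F (v + δ₂ / 2) := by
      have hincl : {ω' | ⟪s₂, X ω'⟫ ≤ v} ⊆ Bad ∪ {ω' | ⟪s₁, X ω'⟫ ≤ v + δ₂ / 2} := by
        intro ω' hω'
        by_cases hb : ω' ∈ Bad
        · exact Or.inl hb
        · refine Or.inr ?_
          have := abs_lt.1 (hclose ω' hb)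
          simp only [mem_setOf_eq] at hω' ⊢
          linarith [this.1]
      calc F₂ v ≤ (μ (Bad ∪ {ω' | ⟪s₁, X ω'⟫ ≤ v + δ₂ / 2})).toReal :=
            ENNReal.toReal_mono (measure_ne_top μ _) (measure_mono hincl)
        _ ≤ ((μ Bad) + μ {ω' | ⟪s₁, X ω'⟫ ≤ v + δ₂ / 2}).toReal :=
            ENNReal.toReal_mono
              (ENNReal.add_ne_top.2 ⟨measure_ne_top μ _, measure_ne_top μ _⟩)
              (measure_union_le _ _)
        _ = (μ Bad).toReal + F (v + δ₂ / 2) :=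
            ENNReal.toReal_add (measure_ne_top μ _) (measure_ne_top μ _)
    have hLB : F (v - δ₂ / 2) ≤ (μ Bad).toReal + F₂ v := by
      have hincl : {ω' | ⟪s₁, X ω'⟫ ≤ v - δ₂ / 2} ⊆ Bad ∪ {ω' | ⟪s₂, X ω'⟫ ≤ v} := by
        intro ω' hω'
        by_cases hb : ω' ∈ Bad
        · exact Or.inl hb
        · refine Or.inr ?_
          have := abs_lt.1 (hclose ω' hb)
          simp only [mem_setOf_eq] at hω' ⊢
          linarith [this.2]
      calc F (v - δ₂ / 2) ≤ (μ (Bad ∪ {ω' | ⟪s₂, X ω'⟫ ≤ v})).toReal :=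
            ENNReal.toReal_mono (measure_ne_top μ _) (measure_mono hincl)
        _ ≤ ((μ Bad) + μ {ω' | ⟪s₂, X ω'⟫ ≤ v}).toReal :=
            ENNReal.toReal_mono
              (ENNReal.add_ne_top.2 ⟨measure_ne_top μ _, measure_ne_top μ _⟩)
              (measure_union_le _ _)
        _ = (μ Bad).toReal + F₂ v :=
            ENNReal.toReal_add (measure_ne_top μ _) (measure_ne_top μ _)
    have h1 := abs_lt.1 hshift₁
    have h2 := abs_lt.1 hshift₂
    rw [abs_le]
    constructor <;> linarith [h1.1, h1.2, h2.1, h2.2]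
  have hU₂ : projCDF μ X s₂ ω = F₂ ⟪s₂, X ω⟫ := cdf_map_eq μ X hX s₂ _
  have hU₁ : projCDF μ X s₁ ω = F ⟪s₁, X ω⟫ := cdf_map_eq μ X hX s₁ _
  rw [hU₂, hU₁]
  have hmid : |F ⟪s₂, X ω⟫ - F ⟪s₁, X ω⟫| < δ / 4 := by
    apply hFmod
    linarith [hclose ω hω, hδ₂]
  have hsv := hsup ⟪s₂, X ω⟫
  have ha := abs_lt.1 hmid
  have hb := abs_le.1 hsv
  rw [abs_lt]
  constructor <;> linarith [ha.1, ha.2, hb.1, hb.2]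

end Aux

/-- For any `ε > 0`, depth `d` and dyadic intervals
`I_i = ((i-1)/2^d, i/2^d]`, `I_j = ((j-1)/2^d, j/2^d]`, there is `η > 0` so that
the probabilities of `(U, V)` landing in `I_i × I_j` computed from two pairs of
projection directions differ by less than `ε` whenever the directions are
`η`-close. -/
theorem stmt11 {Ω : Type*} [MeasurableSpace Ω] (μ : Measure Ω) [IsProbabilityMeasure μ]
    {p q : ℕ} (X : Ω → Euc p) (Y : Ω → Euc q) (hX : Measurable X) (hY : Measurable Y)
    (hcdfX : ∀ s : Euc p, ‖s‖ = 1 →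
      UniformContinuous fun w => cdf (μ.map fun ω => ⟪s, X ω⟫) w)
    (hcdfY : ∀ t : Euc q, ‖t‖ = 1 →
      UniformContinuous fun w => cdf (μ.map fun ω => ⟪t, Y ω⟫) w) :
    ∀ ε > (0 : ℝ), ∀ d : ℕ, ∀ i j : ℕ,
      1 ≤ i → i ≤ 2 ^ d → 1 ≤ j → j ≤ 2 ^ d →
      ∀ (s₁ : Euc p) (t₁ : Euc q), ‖s₁‖ = 1 → ‖t₁‖ = 1 →
      ∃ η > (0 : ℝ), ∀ (s₂ : Euc p) (t₂ : Euc q), ‖s₂‖ = 1 → ‖t₂‖ = 1 →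
        ‖s₁ - s₂‖ < η → ‖t₁ - t₂‖ < η →
        |(μ {ω | projCDF μ X s₁ ω ∈ Set.Ioc (((i : ℝ) - 1) / 2 ^ d) ((i : ℝ) / 2 ^ d) ∧
              projCDF μ Y t₁ ω ∈ Set.Ioc (((j : ℝ) - 1) / 2 ^ d) ((j : ℝ) / 2 ^ d)}).toReal -
          (μ {ω | projCDF μ X s₂ ω ∈ Set.Ioc (((i : ℝ) - 1) / 2 ^ d) ((i : ℝ) / 2 ^ d) ∧
              projCDF μ Y t₂ ω ∈ Set.Ioc (((j : ℝ) - 1) / 2 ^ d) ((j : ℝ) / 2 ^ d)}).toReal|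
          < ε := by
  intro ε hε d i j _ _ _ _ s₁ t₁ hs₁ ht₁
  set δ : ℝ := ε / 11 with hδdef
  have hδ : 0 < δ := by positivity
  obtain ⟨ηX, hηX, BadX, hBadX, hgoodX⟩ := dirLemma μ X hX s₁ (hcdfX s₁ hs₁) hδ
  obtain ⟨ηY, hηY, BadY, hBadY, hgoodY⟩ := dirLemma μ Y hY t₁ (hcdfY t₁ ht₁) hδ
  refine ⟨min ηX ηY, lt_min hηX hηY, ?_⟩
  intro s₂ t₂ hs₂ ht₂ hss htt
  have hss' : ‖s₁ - s₂‖ < ηX := lt_of_lt_of_le hss (min_le_left _ _)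
  have htt' : ‖t₁ - t₂‖ < ηY := lt_of_lt_of_le htt (min_le_right _ _)
  set aI : ℝ := ((i : ℝ) - 1) / 2 ^ d with haI
  set bI : ℝ := (i : ℝ) / 2 ^ d with hbI
  set aJ : ℝ := ((j : ℝ) - 1) / 2 ^ d with haJ
  set bJ : ℝ := (j : ℝ) / 2 ^ d with hbJ
  set U₁ := projCDF μ X s₁ with hU₁d
  set U₂ := projCDF μ X s₂ with hU₂d
  set V₁ := projCDF μ Y t₁ with hV₁d
  set V₂ := projCDF μ Y t₂ with hV₂d
  set E1 : Set Ω := {ω | U₁ ω ∈ Set.Ioc (aI - δ) (aI - δ + δ)} with hE1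
  set E2 : Set Ω := {ω | U₁ ω ∈ Set.Ioc aI (aI + δ)} with hE2
  set E3 : Set Ω := {ω | U₁ ω ∈ Set.Ioc (bI - δ) (bI - δ + δ)} with hE3
  set E4 : Set Ω := {ω | U₁ ω ∈ Set.Ioc bI (bI + δ)} with hE4
  set E5 : Set Ω := {ω | V₁ ω ∈ Set.Ioc (aJ - δ) (aJ - δ + δ)} with hE5
  set E6 : Set Ω := {ω | V₁ ω ∈ Set.Ioc aJ (aJ + δ)} with hE6
  set E7 : Set Ω := {ω | V₁ ω ∈ Set.Ioc (bJ - δ) (bJ - δ + δ)} with hE7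
  set E8 : Set Ω := {ω | V₁ ω ∈ Set.Ioc bJ (bJ + δ)} with hE8
  set R : Set Ω :=
    BadX ∪ (BadY ∪ (E1 ∪ (E2 ∪ (E3 ∪ (E4 ∪ (E5 ∪ (E6 ∪ (E7 ∪ E8)))))))) with hR
  set S₁ : Set Ω := {ω | U₁ ω ∈ Set.Ioc aI bI ∧ V₁ ω ∈ Set.Ioc aJ bJ} with hS₁
  set S₂ : Set Ω := {ω | U₂ ω ∈ Set.Ioc aI bI ∧ V₂ ω ∈ Set.Ioc aJ bJ} with hS₂
  -- inclusion 1
  have incl₁ : S₁ ⊆ S₂ ∪ R := by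
    intro ω hωS
    obtain ⟨hU, hV⟩ := hωS
    simp only [Set.mem_Ioc] at hU hV
    by_cases hbx : ω ∈ BadX
    · exact Or.inr (Or.inl hbx)
    by_cases hby : ω ∈ BadY
    · exact Or.inr (Or.inr (Or.inl hby))
    have hdU := abs_lt.1 (hgoodX s₂ hss' ω hbx)
    have hdV := abs_lt.1 (hgoodY t₂ htt' ω hby)
    by_cases hUm : U₂ ω ∈ Set.Ioc aI bI
    · by_cases hVm : V₂ ω ∈ Set.Ioc aJ bJ
      · exact Or.inl ⟨hUm, hVm⟩
      · right; right; right
        rw [Set.mem_Ioc, not_and_or, not_lt, not_le] at hVm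
        rcases hVm with h | h
        · -- V₂ ≤ aJ hence V₁ ∈ (aJ, aJ + δ] : E6
          refine Or.inr (Or.inr (Or.inr (Or.inr (Or.inr (Or.inl ?_)))))
          exact ⟨hV.1, by linarith [hdV.1]⟩
        · -- bJ < V₂ hence V₁ ∈ (bJ - δ, bJ] : E7
          refine Or.inr (Or.inr (Or.inr (Or.inr (Or.inr (Or.inr (Or.inl ?_))))))
          exact ⟨by linarith [hdV.2], by linarith [hV.2]⟩
    · right; right; right
      rw [Set.mem_Ioc, not_and_or, not_lt, not_le] at hUm
      rcases hUm with h | h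
      · -- U₂ ≤ aI hence U₁ ∈ (aI, aI + δ] : E2
        exact Or.inr (Or.inl ⟨hU.1, by linarith [hdU.1]⟩)
      · -- bI < U₂ hence U₁ ∈ (bI - δ, bI] : E3
        exact Or.inr (Or.inr (Or.inl ⟨by linarith [hdU.2], by linarith [hU.2]⟩))
  -- inclusion 2
  have incl₂ : S₂ ⊆ S₁ ∪ R := by
    intro ω hωS
    obtain ⟨hU, hV⟩ := hωS
    simp only [Set.mem_Ioc] at hU hV
    by_cases hbx : ω ∈ BadX
    · exact Or.inr (Or.inl hbx)
    by_cases hby : ω ∈ BadY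
    · exact Or.inr (Or.inr (Or.inl hby))
    have hdU := abs_lt.1 (hgoodX s₂ hss' ω hbx)
    have hdV := abs_lt.1 (hgoodY t₂ htt' ω hby)
    by_cases hUm : U₁ ω ∈ Set.Ioc aI bI
    · by_cases hVm : V₁ ω ∈ Set.Ioc aJ bJ
      · exact Or.inl ⟨hUm, hVm⟩
      · right; right; right
        rw [Set.mem_Ioc, not_and_or, not_lt, not_le] at hVm
        rcases hVm with h | h
        · -- V₁ ≤ aJ hence V₁ ∈ (aJ - δ, aJ - δ + δ] : E5
          refine Or.inr (Or.inr (Or.inr (Or.inr (Or.inl ?_))))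
          exact ⟨by linarith [hdV.2, hV.1], by linarith⟩
        · -- bJ < V₁ hence V₁ ∈ (bJ, bJ + δ] : E8
          refine Or.inr (Or.inr (Or.inr (Or.inr (Or.inr (Or.inr (Or.inr ?_))))))
          exact ⟨h, by linarith [hdV.1, hV.2]⟩
    · right; right; right
      rw [Set.mem_Ioc, not_and_or, not_lt, not_le] at hUm
      rcases hUm with h | h
      · -- U₁ ≤ aI hence U₁ ∈ (aI - δ, aI - δ + δ] : E1
        exact Or.inl ⟨by linarith [hdU.2, hU.1], by linarith⟩
      · -- bI < U₁ hence U₁ ∈ (bI, bI + δ] : E4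
        exact Or.inr (Or.inr (Or.inr (Or.inl ⟨h, by linarith [hdU.1, hU.2]⟩)))
  -- measure bounds
  have tstep : ∀ s t : Set Ω, (μ (s ∪ t)).toReal ≤ (μ s).toReal + (μ t).toReal := by
    intro s t
    rw [← ENNReal.toReal_add (measure_ne_top μ s) (measure_ne_top μ t)]
    exact ENNReal.toReal_mono
      (ENNReal.add_ne_top.2 ⟨measure_ne_top μ s, measure_ne_top μ t⟩)
      (measure_union_le s t)
  have hcontX : Continuous fun w => cdf (μ.map fun ω => ⟪s₁, X ω⟫) w :=
    (hcdfX s₁ hs₁).continuous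
  have hcontY : Continuous fun w => cdf (μ.map fun ω => ⟪t₁, Y ω⟫) w :=
    (hcdfY t₁ ht₁).continuous
  have hQX : ∀ c : ℝ, (μ {ω | U₁ ω ∈ Set.Ioc c (c + δ)}).toReal ≤ δ := by
    intro c
    have h := projCDF_Ioc_le μ X hX s₁ hcontX (show c ≤ c + δ by linarith)
    rw [show c + δ - c = δ by ring] at h
    exact ENNReal.toReal_le_of_le_ofReal hδ.le h
  have hQY : ∀ c : ℝ, (μ {ω | V₁ ω ∈ Set.Ioc c (c + δ)}).toReal ≤ δ := by
    intro c
    have h := projCDF_Ioc_le μ Y hY t₁ hcontY (show c ≤ c + δ by linarith)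
    rw [show c + δ - c = δ by ring] at h
    exact ENNReal.toReal_le_of_le_ofReal hδ.le h
  have bBX : (μ BadX).toReal ≤ δ := ENNReal.toReal_le_of_le_ofReal hδ.le hBadX
  have bBY : (μ BadY).toReal ≤ δ := ENNReal.toReal_le_of_le_ofReal hδ.le hBadY
  have b1 : (μ E1).toReal ≤ δ := hQX (aI - δ)
  have b2 : (μ E2).toReal ≤ δ := hQX aI
  have b3 : (μ E3).toReal ≤ δ := hQX (bI - δ)
  have b4 : (μ E4).toReal ≤ δ := hQX bI
  have b5 : (μ E5).toReal ≤ δ := hQY (aJ - δ)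
  have b6 : (μ E6).toReal ≤ δ := hQY aJ
  have b7 : (μ E7).toReal ≤ δ := hQY (bJ - δ)
  have b8 : (μ E8).toReal ≤ δ := hQY bJ
  have hRt : (μ R).toReal ≤ 10 * δ := by
    have t8 : (μ (E7 ∪ E8)).toReal ≤ 2 * δ :=
      (tstep _ _).trans (by linarith)
    have t7 : (μ (E6 ∪ (E7 ∪ E8))).toReal ≤ 3 * δ :=
      (tstep _ _).trans (by linarith)
    have t6 : (μ (E5 ∪ (E6 ∪ (E7 ∪ E8)))).toReal ≤ 4 * δ :=
      (tstep _ _).trans (by linarith)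
    have t5 : (μ (E4 ∪ (E5 ∪ (E6 ∪ (E7 ∪ E8))))).toReal ≤ 5 * δ :=
      (tstep _ _).trans (by linarith)
    have t4 : (μ (E3 ∪ (E4 ∪ (E5 ∪ (E6 ∪ (E7 ∪ E8)))))).toReal ≤ 6 * δ :=
      (tstep _ _).trans (by linarith)
    have t3 : (μ (E2 ∪ (E3 ∪ (E4 ∪ (E5 ∪ (E6 ∪ (E7 ∪ E8))))))).toReal ≤ 7 * δ :=
      (tstep _ _).trans (by linarith)
    have t2 : (μ (E1 ∪ (E2 ∪ (E3 ∪ (E4 ∪ (E5 ∪ (E6 ∪ (E7 ∪ E8)))))))).toReal ≤ 8 * δ :=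
      (tstep _ _).trans (by linarith)
    have t1 : (μ (BadY ∪ (E1 ∪ (E2 ∪ (E3 ∪ (E4 ∪ (E5 ∪ (E6 ∪ (E7 ∪ E8))))))))).toReal
        ≤ 9 * δ := (tstep _ _).trans (by linarith)
    exact (tstep _ _).trans (by linarith)
  have hP1 : (μ S₁).toReal ≤ (μ S₂).toReal + (μ R).toReal :=
    le_trans (ENNReal.toReal_mono (measure_ne_top μ _) (measure_mono incl₁)) (tstep _ _)
  have hP2 : (μ S₂).toReal ≤ (μ S₁).toReal + (μ R).toReal :=
    le_trans (ENNReal.toReal_mono (measure_ne_top μ _) (measure_mono incl₂)) (tstep _ _)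
  rw [abs_sub_lt_iff]
  constructor <;> linarith
end
end
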